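/- Almost sure limit of the mediator second moment: under the fixed-design linear mediator model of the context, (1/n) Σ_{i=1}^n M_i² → α₀ᵀ Q α₀ + 2π α₀ᵀ Q α₁ + π₂ α₁ᵀ Q α₁ + σ_m² almost surely. -/

import Mathlib

open MeasureTheory ProbabilityTheory Filter Topology Matrix
open scoped ENNReal NNReal

section Aux
open Finset

lemma kronecker_aux {u : ℕ → ℝ} {L : ℝ}
    (h : Tendsto (fun n : ℕ => ∑ i ∈ Finset.range n, u i / (i + 1)) atTop (𝓝 L)) :
    Tendsto (fun n : ℕ => (1 / (n : ℝ)) * ∑ i ∈ Finset.range n, u i) atTop (𝓝 0) := by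
  set b : ℕ → ℝ := fun n => ∑ i ∈ Finset.range n, u i / (i + 1) with hb
  have key : ∀ n : ℕ, ∑ i ∈ Finset.range n, u i = n * b n - ∑ i ∈ Finset.range n, b i := by
    intro n
    induction n with
    | zero => simp [hb]
    | succ n ih =>
      have hbn : b (n + 1) = b n + u n / (n + 1) := by
        simp [hb, Finset.sum_range_succ]
      have hne : ((n : ℝ) + 1) ≠ 0 := by positivity
      rw [Finset.sum_range_succ, ih, Finset.sum_range_succ, hbn]
      push_cast
      field_simp
      ring
  have hc : Tendsto (fun n : ℕ => (n : ℝ)⁻¹ * ∑ i ∈ Finset.range n, b i) atTop (𝓝 L) :=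
    h.cesaro
  have : Tendsto (fun n : ℕ => b n - (n : ℝ)⁻¹ * ∑ i ∈ Finset.range n, b i) atTop (𝓝 (L - L)) :=
    h.sub hc
  rw [sub_self] at this
  apply this.congr'
  filter_upwards [Ici_mem_atTop 1] with n hn
  have hn0 : ((n : ℝ)) ≠ 0 := by
    have : (1 : ℕ) ≤ n := hn
    positivity
  rw [key, one_div, mul_sub, ← mul_assoc, inv_mul_cancel₀ hn0, one_mul, mul_comm]


lemma sum_inv_sq_le (n : ℕ) : ∑ i ∈ Finset.range n, (1 / ((i : ℝ) + 1)) ^ 2 ≤ 2 := by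
  have key : ∀ m : ℕ, ∑ i ∈ Finset.range m, (1 / ((i : ℝ) + 1)) ^ 2 ≤ 2 - 2 / ((m:ℝ) + 1) := by
    intro m
    induction m with
    | zero => norm_num
    | succ m ih =>
      rw [Finset.sum_range_succ]
      have h1 : (0:ℝ) < (m:ℝ) + 1 := by positivity
      have h2 : (0:ℝ) < (m:ℝ) + 2 := by positivity
      have : (1 / ((m : ℝ) + 1)) ^ 2 ≤ 2 / (m + 1) - 2 / (m + 2) := by
        rw [div_sub_div _ _ (ne_of_gt h1) (ne_of_gt h2), div_pow, div_le_div_iff₀ (by positivity) (by positivity)]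
        ring_nf
        nlinarith [sq_nonneg ((m:ℝ))]
      push_cast
      calc ∑ i ∈ Finset.range m, (1 / ((i : ℝ) + 1)) ^ 2 + (1 / ((m : ℝ) + 1)) ^ 2
          ≤ (2 - 2 / (m + 1)) + (2 / (m + 1) - 2 / (m + 2)) := add_le_add ih this
        _ = 2 - 2 / ((m:ℝ) + 1 + 1) := by ring
  refine (key n).trans ?_
  have h1 : (0:ℝ) < (n:ℝ) + 1 := by positivity
  have h2 : (0:ℝ) ≤ 2 / ((n:ℝ) + 1) := by positivity
  linarith


lemma det_quad {p : ℕ} (z : ℕ → Fin p → ℝ) (Q : Matrix (Fin p) (Fin p) ℝ)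
    (hQ : ∀ j k, Tendsto (fun n : ℕ => (1 / (n : ℝ)) * ∑ i ∈ Finset.range n, z i j * z i k)
      atTop (𝓝 (Q j k)))
    (a b : Fin p → ℝ) :
    Tendsto (fun n : ℕ => (1 / (n : ℝ)) * ∑ i ∈ Finset.range n, (z i ⬝ᵥ a) * (z i ⬝ᵥ b))
      atTop (𝓝 (a ⬝ᵥ Q.mulVec b)) := by
  have hrw : ∀ n : ℕ, (1 / (n : ℝ)) * ∑ i ∈ Finset.range n, (z i ⬝ᵥ a) * (z i ⬝ᵥ b)
      = ∑ j, ∑ k, a j * b k * ((1 / (n : ℝ)) * ∑ i ∈ Finset.range n, z i j * z i k) := by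
    intro n
    rw [Finset.mul_sum]
    calc ∑ i ∈ Finset.range n, (1 / (n : ℝ)) * ((z i ⬝ᵥ a) * (z i ⬝ᵥ b))
        = ∑ i ∈ Finset.range n, ∑ j, ∑ k, a j * b k * ((1 / (n : ℝ)) * (z i j * z i k)) := by
          refine Finset.sum_congr rfl fun i _ => ?_
          rw [dotProduct, dotProduct, Finset.sum_mul_sum, Finset.mul_sum]
          refine Finset.sum_congr rfl fun j _ => ?_
          rw [Finset.mul_sum]
          exact Finset.sum_congr rfl fun k _ => by ring
      _ = ∑ j, ∑ i ∈ Finset.range n, ∑ k, a j * b k * ((1 / (n : ℝ)) * (z i j * z i k)) :=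
          Finset.sum_comm
      _ = ∑ j, ∑ k, ∑ i ∈ Finset.range n, a j * b k * ((1 / (n : ℝ)) * (z i j * z i k)) :=
          Finset.sum_congr rfl fun j _ => Finset.sum_comm
      _ = ∑ j, ∑ k, a j * b k * ((1 / (n : ℝ)) * ∑ i ∈ Finset.range n, z i j * z i k) := by
          refine Finset.sum_congr rfl fun j _ => Finset.sum_congr rfl fun k _ => ?_
          rw [Finset.mul_sum, Finset.mul_sum]
  have hlim : Tendsto (fun n : ℕ => ∑ j, ∑ k, a j * b k *
      ((1 / (n : ℝ)) * ∑ i ∈ Finset.range n, z i j * z i k)) atTop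
      (𝓝 (∑ j, ∑ k, a j * b k * Q j k)) := by
    refine tendsto_finset_sum _ fun j _ => tendsto_finset_sum _ fun k _ => ?_
    exact (hQ j k).const_mul _
  have heq : a ⬝ᵥ Q.mulVec b = ∑ j, ∑ k, a j * b k * Q j k := by
    simp only [dotProduct, mulVec, Finset.mul_sum]
    refine Finset.sum_congr rfl fun j _ => Finset.sum_congr rfl fun k _ => by ring
  rw [heq]
  exact hlim.congr fun n => (hrw n).symm

lemma weighted_slln {Ω : Type*} [MeasurableSpace Ω] (μ : Measure Ω) [IsProbabilityMeasure μ]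
    (Y : ℕ → Ω → ℝ) (hmeas : ∀ i, Measurable (Y i))
    (hindep : iIndepFun Y μ)
    (hident : ∀ i, IdentDistrib (Y i) (Y 0) μ μ)
    (hL2 : MemLp (Y 0) 2 μ) (hmean : ∫ ω, Y 0 ω ∂μ = 0)
    (c : ℕ → ℝ) (C : ℝ) (hc : ∀ i, |c i| ≤ C) :
    ∀ᵐ ω ∂μ, Tendsto (fun n : ℕ => (1 / (n : ℝ)) * ∑ i ∈ Finset.range n, c i * Y i ω)
      atTop (𝓝 0) := by
  -- setup
  have hL2i : ∀ i, MemLp (Y i) 2 μ := fun i => (hident i).memLp_iff.2 hL2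
  have hinti : ∀ i, Integrable (Y i) μ := fun i => (hL2i i).integrable one_le_two
  have hmeani : ∀ i, ∫ ω, Y i ω ∂μ = 0 := fun i => by
    rw [(hident i).integral_eq]; exact hmean
  set d : ℕ → ℝ := fun i => c i / (i + 1) with hd
  set g : ℕ → Ω → ℝ := fun i ω => d i * Y i ω with hg
  have hgmeas : ∀ i, Measurable (g i) := fun i => (hmeas i).const_mul _
  have hgint : ∀ i, Integrable (g i) μ := fun i => ((hinti i).const_mul _)
  have hgL2 : ∀ i, MemLp (g i) 2 μ := fun i => (hL2i i).const_mul _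
  set f : ℕ → Ω → ℝ := fun n ω => ∑ i ∈ Finset.range (n + 1), g i ω with hf
  have hfint : ∀ n, Integrable (f n) μ := fun n =>
    integrable_finset_sum _ fun i _ => hgint i
  have hfeq : ∀ n, f n = ∑ i ∈ Finset.range (n + 1), g i := fun n =>
    funext fun ω => by simp [hf]
  have hfL2 : ∀ n, MemLp (f n) 2 μ := fun n => by
    rw [hfeq n]; exact memLp_finset_sum' _ fun i _ => hgL2 i
  -- filtration
  set ℱ := Filtration.natural Y (fun i => (hmeas i).stronglyMeasurable) with hℱ
  have hadap : StronglyAdapted ℱ f := by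
    intro n
    refine Finset.stronglyMeasurable_fun_sum _ fun i hi => ?_
    have hin : i ≤ n := Nat.lt_succ_iff.1 (Finset.mem_range.1 hi)
    exact ((Filtration.stronglyAdapted_natural (fun i => (hmeas i).stronglyMeasurable) i).mono
      (ℱ.mono hin)).const_smul (d i)
  -- independence of Y (n+1) from ℱ n
  have hYindep : ∀ n : ℕ, Indep (MeasurableSpace.comap (Y (n + 1)) inferInstance) (ℱ n) μ := by
    intro n
    have h := indep_iSup_of_disjoint
      (m := fun i => MeasurableSpace.comap (Y i) inferInstance)
      (fun i => (hmeas i).comap_le) hindep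
      (S := {n + 1}) (T := {j | j ≤ n})
      (by simp [Set.disjoint_left, Nat.lt_succ_iff])
    have h1 : (⨆ i ∈ ({n + 1} : Set ℕ), MeasurableSpace.comap (Y i) inferInstance)
        = MeasurableSpace.comap (Y (n + 1)) inferInstance := by simp
    have h2 : (⨆ i ∈ ({j | j ≤ n} : Set ℕ), MeasurableSpace.comap (Y i) inferInstance)
        = (ℱ n : MeasurableSpace Ω) := rfl
    rw [h1, h2] at h
    exact h
  -- martingale property
  have hmart : Martingale f ℱ μ := by
    refine martingale_nat hadap hfint fun n => ?_
    have hsplit : f (n + 1) = f n + g (n + 1) := by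
      funext ω; simp [hf, Finset.sum_range_succ]
    rw [hsplit]
    have hadd := condExp_add (m := ℱ n) (hfint n) (hgint (n + 1))
    have h1 : μ[f n | ℱ n] = f n :=
      condExp_of_stronglyMeasurable (ℱ.le n) (hadap n) (hfint n)
    have h2 : μ[g (n + 1) | ℱ n] =ᵐ[μ] fun _ => 0 := by
      have hsm : StronglyMeasurable[MeasurableSpace.comap (Y (n+1)) inferInstance] (Y (n+1)) := by
        refine Measurable.stronglyMeasurable ?_
        exact measurable_iff_comap_le.2 le_rfl
      have hce : μ[Y (n + 1) | ℱ n] =ᵐ[μ] fun _ => ∫ ω, Y (n + 1) ω ∂μ :=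
        condExp_indep_eq ((hmeas (n+1)).comap_le) (ℱ.le n) hsm (hYindep n)
      have hsmul := condExp_smul (m := ℱ n) (μ := μ) (d (n + 1)) (Y (n + 1))
      have : g (n + 1) = d (n + 1) • Y (n + 1) := rfl
      rw [this]
      refine hsmul.trans ?_
      filter_upwards [hce] with ω hω
      simp [hω, hmeani (n + 1)]
    filter_upwards [hadd, h2] with ω hω h2ω
    rw [hω, Pi.add_apply, h1, h2ω, add_zero]
  -- L¹ bound
  have hCnn : 0 ≤ C := le_trans (abs_nonneg _) (hc 0)
  set V : ℝ := variance (Y 0) μ with hV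
  have hVnn : 0 ≤ V := variance_nonneg _ _
  have hvar : ∀ n, variance (f n) μ ≤ C ^ 2 * V * 2 := by
    intro n
    have hps : Set.Pairwise ↑(Finset.range (n+1)) fun i j => IndepFun (g i) (g j) μ := by
      intro i _ j _ hij
      exact (hindep.indepFun hij).comp (measurable_const_mul (d i)) (measurable_const_mul (d j))
    have hvs := IndepFun.variance_sum (μ := μ) (X := g) (s := Finset.range (n+1))
      (fun i _ => hgL2 i) hps
    rw [← hfeq n] at hvs
    have hgv : ∀ i : ℕ, variance (g i) μ = d i ^ 2 * V := by
      intro i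
      have h1 : variance (g i) μ = d i ^ 2 * variance (Y i) μ := variance_const_mul (d i) (Y i) μ
      rw [h1, (hident i).variance_eq]
    have hdle : ∀ i : ℕ, d i ^ 2 ≤ C ^ 2 * (1 / ((i:ℝ) + 1)) ^ 2 := by
      intro i
      have h1 : (0:ℝ) < (i:ℝ) + 1 := by positivity
      have h2 : (c i) ^ 2 ≤ C ^ 2 := by nlinarith [hc i, abs_nonneg (c i), sq_abs (c i)]
      have h4 : d i ^ 2 = (c i) ^ 2 * (1 / ((i:ℝ) + 1)) ^ 2 := by
        simp only [hd]; field_simp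
      rw [h4]
      exact mul_le_mul_of_nonneg_right h2 (by positivity)
    calc variance (f n) μ = ∑ i ∈ Finset.range (n+1), d i ^ 2 * V := by
          rw [hvs]; exact Finset.sum_congr rfl fun i _ => hgv i
      _ ≤ ∑ i ∈ Finset.range (n+1), C ^ 2 * (1 / ((i:ℝ) + 1)) ^ 2 * V :=
          Finset.sum_le_sum fun i _ => mul_le_mul_of_nonneg_right (hdle i) hVnn
      _ = C ^ 2 * V * ∑ i ∈ Finset.range (n+1), (1 / ((i:ℝ) + 1)) ^ 2 := by
          rw [Finset.mul_sum]; exact Finset.sum_congr rfl fun i _ => by ring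
      _ ≤ C ^ 2 * V * 2 :=
          mul_le_mul_of_nonneg_left (sum_inv_sq_le (n+1)) (by positivity)
  -- mean of f n
  have hfmean : ∀ n, ∫ ω, f n ω ∂μ = 0 := by
    intro n
    rw [hf]
    rw [integral_finset_sum _ fun i _ => hgint i]
    simp only [hg]
    refine Finset.sum_eq_zero fun i _ => ?_
    rw [integral_const_mul, hmeani i, mul_zero]
  -- second moment bound
  set B : ℝ := C ^ 2 * V * 2 with hB
  have hBnn : 0 ≤ B := by positivity
  have hsq : ∀ n, ∫ ω, (f n ω) ^ 2 ∂μ ≤ B := by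
    intro n
    have hv := variance_eq_sub (hfL2 n)
    have : μ[(f n) ^ 2] = variance (f n) μ + μ[f n] ^ 2 := by rw [hv]; ring
    have hμ : μ[f n] = 0 := hfmean n
    have h2 : μ[(f n) ^ 2] = ∫ ω, (f n ω) ^ 2 ∂μ := by
      simp [Pi.pow_apply]
    rw [h2, hμ] at this
    rw [this]
    simpa using hvar n
  -- L1 bound
  have hL1 : ∀ n, ∫ ω, |f n ω| ∂μ ≤ (1 + B) / 2 := by
    intro n
    have hint2 : Integrable (fun ω => (1 + (f n ω) ^ 2) / 2) μ :=
      ((integrable_const (1:ℝ)).add (hfL2 n).integrable_sq).div_const 2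
    have hmono : ∫ ω, |f n ω| ∂μ ≤ ∫ ω, (1 + (f n ω) ^ 2) / 2 ∂μ := by
      refine integral_mono (hfint n).abs hint2 fun ω => ?_
      nlinarith [sq_nonneg (|f n ω| - 1), sq_abs (f n ω)]
    refine hmono.trans ?_
    rw [integral_div, integral_add (integrable_const _) (hfL2 n).integrable_sq]
    simp only [integral_const, probReal_univ, measure_univ, ENNReal.toReal_one, smul_eq_mul, one_mul]
    have := hsq n
    linarith
  have hbdd : ∀ n, eLpNorm (f n) 1 μ ≤ ((1 + B) / 2).toNNReal := by
    intro n
    have h1 : eLpNorm (f n) 1 μ = ENNReal.ofReal (∫ ω, |f n ω| ∂μ) := by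
      rw [eLpNorm_one_eq_lintegral_enorm,
        ← ofReal_integral_norm_eq_lintegral_enorm (hfint n)]
      simp [Real.norm_eq_abs]
    rw [h1]
    exact ENNReal.ofReal_le_ofReal (hL1 n)
  -- martingale convergence
  have hconv := hmart.submartingale.exists_ae_tendsto_of_bdd hbdd
  filter_upwards [hconv] with ω hω
  obtain ⟨L, hL⟩ := hω
  have hS : Tendsto (fun m : ℕ => ∑ i ∈ Finset.range m, (c i * Y i ω) / (i + 1))
      atTop (𝓝 L) := by
    rw [← tendsto_add_atTop_iff_nat 1]
    refine hL.congr fun n => ?_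
    refine Finset.sum_congr rfl fun i _ => ?_
    simp only [hg, hd]
    ring
  have := kronecker_aux hS
  exact this

end Aux

theorem mediator_second_moment
    {Ω : Type*} [MeasurableSpace Ω] (μ : Measure Ω) [IsProbabilityMeasure μ]
    {p : ℕ} (z : ℕ → Fin p → ℝ) (C : ℝ) (hzbound : ∀ i, ‖z i‖ ≤ C)
    (Q : Matrix (Fin p) (Fin p) ℝ)
    (hQ : ∀ j k, Tendsto (fun n : ℕ => (1 / (n : ℝ)) * ∑ i ∈ Finset.range n, z i j * z i k)
      atTop (𝓝 (Q j k)))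
    (T ε : ℕ → Ω → ℝ)
    (hTmeas : ∀ i, Measurable (T i)) (hεmeas : ∀ i, Measurable (ε i))
    (hindep : iIndepFun (fun i ω => (T i ω, ε i ω)) μ)
    (hident : ∀ i, IdentDistrib (fun ω => (T i ω, ε i ω)) (fun ω => (T 0 ω, ε 0 ω)) μ μ)
    (hpair_indep : IndepFun (T 0) (ε 0) μ)
    (π π₂ σm : ℝ)
    (hT_int : Integrable (T 0) μ) (hT_mean : ∫ ω, T 0 ω ∂μ = π)
    (hT2_int : Integrable (fun ω => T 0 ω ^ 2) μ)
    (hT2_mean : ∫ ω, T 0 ω ^ 2 ∂μ = π₂)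
    (hT4 : MemLp (T 0) 4 μ)
    (hε_int : Integrable (ε 0) μ) (hε_mean : ∫ ω, ε 0 ω ∂μ = 0)
    (hε2_int : Integrable (fun ω => ε 0 ω ^ 2) μ)
    (hε2_mean : ∫ ω, ε 0 ω ^ 2 ∂μ = σm ^ 2)
    (α₀ α₁ : Fin p → ℝ) (M : ℕ → Ω → ℝ)
    (hMdef : ∀ i ω, M i ω = z i ⬝ᵥ α₀ + T i ω * (z i ⬝ᵥ α₁) + ε i ω) :
    ∀ᵐ ω ∂μ, Tendsto
      (fun n : ℕ => (1 / (n : ℝ)) * ∑ i ∈ Finset.range n, M i ω ^ 2)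
      atTop (𝓝 (α₀ ⬝ᵥ Q.mulVec α₀ + 2 * π * (α₀ ⬝ᵥ Q.mulVec α₁)
        + π₂ * (α₁ ⬝ᵥ Q.mulVec α₁) + σm ^ 2)) := by
  classical
  -- weights
  set a : ℕ → ℝ := fun i => z i ⬝ᵥ α₀ with ha
  set b : ℕ → ℝ := fun i => z i ⬝ᵥ α₁ with hbdef
  have hdot_bound : ∀ (v : Fin p → ℝ) (i : ℕ), |z i ⬝ᵥ v| ≤ C * ∑ j, |v j| := by
    intro v i
    calc |z i ⬝ᵥ v| ≤ ∑ j, |z i j * v j| := Finset.abs_sum_le_sum_abs _ _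
      _ ≤ ∑ j, C * |v j| := by
          refine Finset.sum_le_sum fun j _ => ?_
          rw [abs_mul]
          refine mul_le_mul_of_nonneg_right ?_ (abs_nonneg _)
          have h1 : |z i j| ≤ ‖z i‖ := by
            rw [← Real.norm_eq_abs]; exact norm_le_pi_norm (z i) j
          exact h1.trans (hzbound i)
      _ = C * ∑ j, |v j| := (Finset.mul_sum _ _ _).symm
  set Ca : ℝ := C * ∑ j, |α₀ j| with hCa
  set Cb : ℝ := C * ∑ j, |α₁ j| with hCb
  have haB : ∀ i, |a i| ≤ Ca := fun i => hdot_bound α₀ i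
  have hbB : ∀ i, |b i| ≤ Cb := fun i => hdot_bound α₁ i
  have haN : 0 ≤ Ca := le_trans (abs_nonneg _) (haB 0)
  have hbN : 0 ≤ Cb := le_trans (abs_nonneg _) (hbB 0)
  -- L² facts
  have hT2mem : MemLp (T 0) 2 μ := hT4.mono_exponent (by norm_num)
  have hTsqmem : MemLp (fun ω => T 0 ω ^ 2) 2 μ := by
    have h := hT4.smul (φ := T 0) hT4 (r := 2) (hpqr := ⟨by rw [← one_div, ← one_div]; exact Eq.symm (by
        have h4 : (4:ℝ≥0∞)⁻¹ = 2⁻¹ * 2⁻¹ := by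
          rw [show (4:ℝ≥0∞) = 2 * 2 by norm_num,
            ENNReal.mul_inv (Or.inl (by norm_num)) (Or.inl (by norm_num))]
        rw [one_div, one_div, h4, ← mul_add, ENNReal.inv_two_add_inv_two, mul_one]
        : (1:ℝ≥0∞) / 2 = 1 / 4 + 1 / 4)⟩)
    have heq : (fun ω => T 0 ω ^ 2) = (T 0 • T 0) := by
      funext ω; simp [Pi.smul_apply, smul_eq_mul, sq]
    rw [heq]; exact h
  have hεmem : MemLp (ε 0) 2 μ :=
    (memLp_two_iff_integrable_sq (hεmeas 0).aestronglyMeasurable).2 hε2_int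
  have hTεmem : MemLp (fun ω => T 0 ω * ε 0 ω) 2 μ := by
    refine (memLp_two_iff_integrable_sq
      ((hTmeas 0).mul (hεmeas 0)).aestronglyMeasurable).2 ?_
    have hip : IndepFun (fun ω => T 0 ω ^ 2) (fun ω => ε 0 ω ^ 2) μ :=
      hpair_indep.comp (measurable_id.pow_const 2) (measurable_id.pow_const 2)
    have hintsq : Integrable ((fun ω => T 0 ω ^ 2) * fun ω => ε 0 ω ^ 2) μ :=
      hip.integrable_mul hT2_int hε2_int
    exact hintsq.congr (Filter.Eventually.of_forall fun ω => by
      simp [Pi.mul_apply]; ring)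
  -- means
  have hmean1 : ∫ ω, (T 0 ω - π) ∂μ = 0 := by
    rw [integral_sub hT_int (integrable_const π), hT_mean, integral_const]
    simp
  have hmean2 : ∫ ω, (T 0 ω ^ 2 - π₂) ∂μ = 0 := by
    rw [integral_sub hT2_int (integrable_const π₂), hT2_mean, integral_const]
    simp
  have hmean4 : ∫ ω, T 0 ω * ε 0 ω ∂μ = 0 := by
    have h := hpair_indep.integral_mul_eq_mul_integral hT_int.aestronglyMeasurable hε_int.aestronglyMeasurable
    calc ∫ ω, T 0 ω * ε 0 ω ∂μ = ∫ ω, (T 0 * ε 0) ω ∂μ := by rfl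
      _ = (∫ ω, T 0 ω ∂μ) * ∫ ω, ε 0 ω ∂μ := h
      _ = 0 := by rw [hT_mean, hε_mean, mul_zero]
  -- the four weighted SLLN applications
  have H1 := weighted_slln μ (fun i ω => T i ω - π)
    (fun i => (hTmeas i).sub measurable_const)
    (hindep.comp (fun _ => fun q : ℝ × ℝ => q.1 - π)
      (fun _ => measurable_fst.sub measurable_const))
    (fun i => (hident i).comp (measurable_fst.sub measurable_const))
    ((hT2mem).sub (memLp_const π)) hmean1
    (fun i => 2 * a i * b i) (2 * Ca * Cb)
    (fun i => by
      rw [abs_mul, abs_mul, abs_two]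
      calc 2 * |a i| * |b i| ≤ 2 * Ca * |b i| := by
            have := haB i; nlinarith [abs_nonneg (b i)]
        _ ≤ 2 * Ca * Cb := by have := hbB i; nlinarith)
  have H2 := weighted_slln μ (fun i ω => T i ω ^ 2 - π₂)
    (fun i => ((hTmeas i).pow_const 2).sub measurable_const)
    (hindep.comp (fun _ => fun q : ℝ × ℝ => q.1 ^ 2 - π₂)
      (fun _ => (measurable_fst.pow_const 2).sub measurable_const))
    (fun i => (hident i).comp ((measurable_fst.pow_const 2).sub measurable_const))
    (hTsqmem.sub (memLp_const π₂)) hmean2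
    (fun i => b i * b i) (Cb * Cb)
    (fun i => by
      rw [abs_mul]
      have := hbB i
      nlinarith [abs_nonneg (b i)])
  have H3 := weighted_slln μ (fun i ω => ε i ω)
    (fun i => hεmeas i)
    (hindep.comp (fun _ => fun q : ℝ × ℝ => q.2) (fun _ => measurable_snd))
    (fun i => (hident i).comp measurable_snd)
    hεmem hε_mean
    (fun i => 2 * a i) (2 * Ca)
    (fun i => by
      rw [abs_mul, abs_two]
      have := haB i; nlinarith)
  have H4 := weighted_slln μ (fun i ω => T i ω * ε i ω)
    (fun i => (hTmeas i).mul (hεmeas i))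
    (hindep.comp (fun _ => fun q : ℝ × ℝ => q.1 * q.2)
      (fun _ => measurable_fst.mul measurable_snd))
    (fun i => (hident i).comp (measurable_fst.mul measurable_snd))
    hTεmem hmean4
    (fun i => 2 * b i) (2 * Cb)
    (fun i => by
      rw [abs_mul, abs_two]
      have := hbB i; nlinarith)
  -- iid SLLN for ε²
  have H5 := strong_law_ae_real (fun i ω => ε i ω ^ 2)
    hε2_int
    (fun i j hij => ((hindep.indepFun hij).comp
      (measurable_snd.pow_const 2) (measurable_snd.pow_const 2)))
    (fun i => (hident i).comp (measurable_snd.pow_const 2))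
  rw [hε2_mean] at H5
  -- deterministic limits
  have D1 := det_quad z Q hQ α₀ α₀
  have D2 := det_quad z Q hQ α₀ α₁
  have D3 := det_quad z Q hQ α₁ α₁
  filter_upwards [H1, H2, H3, H4, H5] with ω h1 h2 h3 h4 h5
  have hlim := ((((((D1.add (D2.const_mul (2 * π))).add
      (D3.const_mul π₂)).add h1).add h2).add h3).add h4).add h5
  have hval : α₀ ⬝ᵥ Q.mulVec α₀ + 2 * π * (α₀ ⬝ᵥ Q.mulVec α₁)
      + π₂ * (α₁ ⬝ᵥ Q.mulVec α₁) + σm ^ 2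
      = α₀ ⬝ᵥ Q.mulVec α₀ + 2 * π * (α₀ ⬝ᵥ Q.mulVec α₁)
        + π₂ * (α₁ ⬝ᵥ Q.mulVec α₁) + 0 + 0 + 0 + 0 + σm ^ 2 := by ring
  rw [hval]
  refine hlim.congr fun n => ?_
  beta_reduce
  have expand : ∀ i, M i ω ^ 2 =
      (z i ⬝ᵥ α₀) * (z i ⬝ᵥ α₀) + 2 * π * ((z i ⬝ᵥ α₀) * (z i ⬝ᵥ α₁))
      + π₂ * ((z i ⬝ᵥ α₁) * (z i ⬝ᵥ α₁))
      + (2 * a i * b i) * (T i ω - π) + (b i * b i) * (T i ω ^ 2 - π₂)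
      + (2 * a i) * (ε i ω) + (2 * b i) * (T i ω * ε i ω) + ε i ω ^ 2 := by
    intro i
    rw [hMdef]
    simp only [ha, hbdef]
    ring
  have hsplit : ∑ i ∈ Finset.range n, M i ω ^ 2 =
      (∑ i ∈ Finset.range n, (z i ⬝ᵥ α₀) * (z i ⬝ᵥ α₀))
      + (∑ i ∈ Finset.range n, 2 * π * ((z i ⬝ᵥ α₀) * (z i ⬝ᵥ α₁)))
      + (∑ i ∈ Finset.range n, π₂ * ((z i ⬝ᵥ α₁) * (z i ⬝ᵥ α₁)))
      + (∑ i ∈ Finset.range n, (2 * a i * b i) * (T i ω - π))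
      + (∑ i ∈ Finset.range n, (b i * b i) * (T i ω ^ 2 - π₂))
      + (∑ i ∈ Finset.range n, (2 * a i) * (ε i ω))
      + (∑ i ∈ Finset.range n, (2 * b i) * (T i ω * ε i ω))
      + (∑ i ∈ Finset.range n, ε i ω ^ 2) := by
    rw [Finset.sum_congr rfl fun i _ => expand i]
    rw [Finset.sum_add_distrib, Finset.sum_add_distrib, Finset.sum_add_distrib,
      Finset.sum_add_distrib, Finset.sum_add_distrib, Finset.sum_add_distrib,
      Finset.sum_add_distrib]
  have hn3 : (∑ i ∈ Finset.range n, 2 * π * ((z i ⬝ᵥ α₀) * (z i ⬝ᵥ α₁)))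
      = 2 * π * ∑ i ∈ Finset.range n, (z i ⬝ᵥ α₀) * (z i ⬝ᵥ α₁) :=
    (Finset.mul_sum _ _ _).symm
  have hn4 : (∑ i ∈ Finset.range n, π₂ * ((z i ⬝ᵥ α₁) * (z i ⬝ᵥ α₁)))
      = π₂ * ∑ i ∈ Finset.range n, (z i ⬝ᵥ α₁) * (z i ⬝ᵥ α₁) :=
    (Finset.mul_sum _ _ _).symm
  rw [hsplit, hn3, hn4]
  ring
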